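/- Define the deformed Hecke operator for 't Hooft flux v ∈ L/NL (L = H^{⊕11}) by T'_N^{(v)} ψ(τ) = N^{-2} Σ_{ad=N, 0≤b<d} δ_{dv,0} ζ_d^{-(b/2)(v/a)²} d·ψ((aτ+b)/d). If ψ is a meromorphic modular form of weight -12 for SL(2,Z), then T'_N^{(v)} ψ(-1/τ) = N^{-11} τ^{-12} Σ_{u ∈ L/NL} ζ_N^{u·v} T'_N^{(u)} ψ(τ). -/

import Mathlib

open Complex Finset

/-- The hyperbolic bilinear form on `H^{⊕n}`, `H` having Gram matrix `[[0,1],[1,0]]`. -/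
def hypB (n : ℕ) (x y : Fin (2 * n) → ℤ) : ℤ :=
  ∑ i : Fin n,
    (x ⟨2 * i.val, by have := i.isLt; omega⟩ * y ⟨2 * i.val + 1, by have := i.isLt; omega⟩ +
     x ⟨2 * i.val + 1, by have := i.isLt; omega⟩ * y ⟨2 * i.val, by have := i.isLt; omega⟩)

/-- Integer lift of an element of `L/NL`. -/
def zlift {N : ℕ} (v : Fin (2 * 11) → ZMod N) : Fin (2 * 11) → ℤ := fun i => ((v i).val : ℤ)

/-- Integer lift of `v/a` for `v ∈ L/NL` with `v = a·ṽ` (componentwise integer division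
of the canonical lift by `a`). -/
def zdiv {N : ℕ} (v : Fin (2 * 11) → ZMod N) (a : ℕ) : Fin (2 * 11) → ℤ :=
  fun i => ((v i).val : ℤ) / (a : ℤ)

/-- `eZ M x = exp(2πi x / M) = ζ_M^x`. -/
noncomputable def eZ (M : ℕ) (x : ℤ) : ℂ :=
  Complex.exp (2 * (Real.pi : ℂ) * Complex.I * (x : ℂ) / (M : ℂ))

/-- A meromorphic modular form of weight `-12` for `SL(2,ℤ)`, viewed as a function on
the upper half-plane. -/
def MeroModularNeg12 (ψ : ℂ → ℂ) : Prop :=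
  MeromorphicOn ψ {z : ℂ | 0 < z.im} ∧
  (∀ τ : ℂ, 0 < τ.im → ψ (τ + 1) = ψ τ) ∧
  (∀ τ : ℂ, 0 < τ.im → ψ (-1 / τ) = τ ^ (-12 : ℤ) * ψ τ)

/-- The deformed Hecke operator with 't Hooft flux `v ∈ L/NL`, `L = H^{⊕11}`:
`T'_N^{(v)} ψ(τ) = N^{-2} Σ_{ad=N, 0≤b<d} δ_{dv,0} ζ_d^{-(b/2)(v/a)²} d ψ((aτ+b)/d)`. -/
noncomputable def deformedHecke (N : ℕ) (v : Fin (2 * 11) → ZMod N) (ψ : ℂ → ℂ) : ℂ → ℂ :=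
  fun τ =>
    (N : ℂ) ^ (-2 : ℤ) *
      ∑ p ∈ Nat.divisorsAntidiagonal N, ∑ b ∈ Finset.range p.2,
        (if ∀ i, ((p.2 : ℕ) : ZMod N) * v i = 0
          then eZ p.2 (-((b : ℤ) * (hypB 11 (zdiv v p.1) (zdiv v p.1) / 2)))
          else 0) * (p.2 : ℂ) * ψ (((p.1 : ℂ) * τ + (b : ℂ)) / (p.2 : ℂ))

lemma eZ_add (M : ℕ) (x y : ℤ) : eZ M (x + y) = eZ M x * eZ M y := by
  rw [eZ, eZ, eZ, ← Complex.exp_add]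
  congr 1
  push_cast
  ring

lemma eZ_int_mul (M : ℕ) (k : ℤ) : eZ M ((M : ℤ) * k) = 1 := by
  rcases Nat.eq_zero_or_pos M with h | h
  · simp [eZ, h]
  · rw [eZ]
    have hM : (M : ℂ) ≠ 0 := by exact_mod_cast h.ne'
    have : 2 * (Real.pi : ℂ) * Complex.I * (((M : ℤ) * k : ℤ) : ℂ) / (M : ℂ)
        = (k : ℂ) * (2 * (Real.pi : ℝ) * Complex.I) := by
      push_cast
      field_simp
    rw [this, Complex.exp_int_mul_two_pi_mul_I]

lemma eZ_congr (M : ℕ) {x y : ℤ} (h : (x : ZMod M) = (y : ZMod M)) : eZ M x = eZ M y := by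
  have : ((x - y : ℤ) : ZMod M) = 0 := by push_cast [h]; ring
  rw [ZMod.intCast_zmod_eq_zero_iff_dvd] at this
  obtain ⟨k, hk⟩ := this
  have hx : x = y + (M : ℤ) * k := by omega
  rw [hx, eZ_add, eZ_int_mul, mul_one]

lemma eZ_mul_left (a M : ℕ) (ha : a ≠ 0) (x : ℤ) : eZ (a * M) ((a : ℤ) * x) = eZ M x := by
  rcases Nat.eq_zero_or_pos M with h | h
  · simp [eZ, h]
  · rw [eZ, eZ]
    congr 1
    have ha' : (a : ℂ) ≠ 0 := by exact_mod_cast ha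
    have hM : (M : ℂ) ≠ 0 := by exact_mod_cast h.ne'
    push_cast
    field_simp

lemma eZ_pow (M : ℕ) (k : ℤ) (j : ℕ) : eZ M ((j : ℤ) * k) = (eZ M k) ^ j := by
  rw [eZ, eZ, ← Complex.exp_nat_mul]
  congr 1
  push_cast
  ring

lemma eZ_eq_one_iff (M : ℕ) (hM : M ≠ 0) (k : ℤ) : eZ M k = 1 ↔ (M : ℤ) ∣ k := by
  constructor
  · intro h
    rw [eZ, Complex.exp_eq_one_iff] at h
    obtain ⟨n, hn⟩ := h
    have hM' : (M : ℂ) ≠ 0 := by exact_mod_cast hM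
    have h2 : (2 * (Real.pi : ℂ) * Complex.I) ≠ 0 := by
      simp [Real.pi_ne_zero, Complex.I_ne_zero]
    have : (k : ℂ) = (n : ℂ) * (M : ℂ) := by
      field_simp at hn
      have := hn
      -- 2πI k = n * (2πI) * M
      have h3 : (2 * (Real.pi : ℂ) * Complex.I) * (k : ℂ) = (2 * (Real.pi : ℂ) * Complex.I) * ((n : ℂ) * M) := by
        rw [hn]; ring
      exact mul_left_cancel₀ h2 h3
    have : k = n * M := by exact_mod_cast this
    exact ⟨n, by linarith⟩
  · rintro ⟨n, rfl⟩
    exact eZ_int_mul M n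

lemma geom_sum_range (M : ℕ) (hM : M ≠ 0) (k : ℤ) :
    ∑ j ∈ Finset.range M, eZ M ((j : ℤ) * k) = if (M : ℤ) ∣ k then (M : ℂ) else 0 := by
  by_cases h : (M : ℤ) ∣ k
  · simp only [h, if_true]
    obtain ⟨n, rfl⟩ := h
    have : ∀ j ∈ Finset.range M, eZ M ((j : ℤ) * ((M : ℤ) * n)) = 1 := by
      intro j _
      have : (j : ℤ) * ((M : ℤ) * n) = (M : ℤ) * (j * n) := by ring
      rw [this, eZ_int_mul]
    rw [Finset.sum_congr rfl this]
    simp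
  · simp only [h, if_false]
    have hz : eZ M k ≠ 1 := fun hc => h ((eZ_eq_one_iff M hM k).1 hc)
    have : ∀ j ∈ Finset.range M, eZ M ((j : ℤ) * k) = (eZ M k) ^ j := fun j _ => eZ_pow M k j
    rw [Finset.sum_congr rfl this, geom_sum_eq hz M]
    have : (eZ M k) ^ M = 1 := by
      rw [← eZ_pow]
      have : ((M : ℕ) : ℤ) * k = (M : ℤ) * k := rfl
      rw [this, eZ_int_mul]
    rw [this]
    simp

lemma sum_zmod_eq_sum_range (m : ℕ) [NeZero m] (f : ℕ → ℂ) :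
    ∑ x : ZMod m, f (x.val) = ∑ j ∈ Finset.range m, f j := by
  apply Finset.sum_nbij' (i := fun x => ZMod.val x) (j := fun j => (j : ZMod m))
  · intro x _; exact Finset.mem_range.2 (ZMod.val_lt x)
  · intro j _; exact Finset.mem_univ _
  · intro x _; exact ZMod.natCast_rightInverse x
  · intro j hj; exact ZMod.val_cast_of_lt (Finset.mem_range.1 hj)
  · intro x _; rfl

lemma geom_sum_zmod (M : ℕ) [NeZero M] (k : ℤ) :
    ∑ x : ZMod M, eZ M ((x.val : ℤ) * k) = if (M : ℤ) ∣ k then (M : ℂ) else 0 := by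
  rw [sum_zmod_eq_sum_range M (fun j => eZ M ((j : ℤ) * k))]
  exact geom_sum_range M (NeZero.ne M) k

lemma denom_ne_zero (c d : ℤ) (hcd : ¬(c = 0 ∧ d = 0)) (τ : ℂ) (hτ : 0 < τ.im) :
    (c : ℂ) * τ + d ≠ 0 := by
  intro h
  by_cases hc : c = 0
  · subst hc
    simp at h
    exact hcd ⟨rfl, by exact_mod_cast h⟩
  · have him : ((c : ℂ) * τ + d).im = (c : ℝ) * τ.im := by
      simp [Complex.add_im, Complex.mul_im]
    have h0 : ((c : ℂ) * τ + d).im = 0 := by rw [h]; simp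
    rw [him] at h0
    have hc' : (c : ℝ) ≠ 0 := by exact_mod_cast hc
    exact (mul_ne_zero hc' (ne_of_gt hτ)) h0

lemma moebius_im (a b c d : ℤ) (h : a * d - b * c = 1) (τ : ℂ) (hτ : 0 < τ.im) :
    0 < (((a : ℂ) * τ + b) / ((c : ℂ) * τ + d)).im := by
  have hcd : ¬(c = 0 ∧ d = 0) := by rintro ⟨rfl, rfl⟩; simp at h
  have hw : (c : ℂ) * τ + d ≠ 0 := denom_ne_zero c d hcd τ hτ
  have hns : 0 < Complex.normSq ((c : ℂ) * τ + d) := Complex.normSq_pos.2 hw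
  have hR : (a : ℝ) * d - b * c = 1 := by exact_mod_cast h
  have key : (((a : ℂ) * τ + b) / ((c : ℂ) * τ + d)).im
      = τ.im / Complex.normSq ((c : ℂ) * τ + d) := by
    rw [Complex.div_im]
    rw [div_sub_div_same]
    congr 1
    simp only [Complex.add_im, Complex.add_re, Complex.mul_im, Complex.mul_re,
      Complex.intCast_re, Complex.intCast_im]
    linear_combination τ.im * hR
  rw [key]
  exact div_pos hτ hns

lemma psi_int_shift {ψ : ℂ → ℂ} (hψ : MeroModularNeg12 ψ) (k : ℤ) :
    ∀ τ : ℂ, 0 < τ.im → ψ (τ + k) = ψ τ := by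
  induction k using Int.induction_on with
  | zero => intro τ hτ; simp
  | succ n IH =>
      intro τ hτ
      have h1 : (τ : ℂ) + ((n : ℤ) + 1 : ℤ) = (τ + (n : ℤ)) + 1 := by push_cast; ring
      rw [h1, hψ.2.1 _ (by simp [Complex.add_im, hτ]), IH τ hτ]
  | pred n IH =>
      intro τ hτ
      have h1 : (τ : ℂ) + (-(n : ℤ) - 1 : ℤ) + 1 = τ + (-(n : ℤ) : ℤ) := by push_cast; ring
      have h2 : 0 < ((τ : ℂ) + (-(n : ℤ) - 1 : ℤ)).im := by simp [Complex.add_im, hτ]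
      have := hψ.2.1 _ h2
      rw [h1] at this
      rw [← this]
      exact IH τ hτ

lemma psi_SL2 {ψ : ℂ → ℂ} (hψ : MeroModularNeg12 ψ) :
    ∀ (n : ℕ) (a b c d : ℤ), c.natAbs = n → a * d - b * c = 1 → ∀ τ : ℂ, 0 < τ.im →
      ψ (((a : ℂ) * τ + b) / ((c : ℂ) * τ + d)) = ((c : ℂ) * τ + d) ^ (-12 : ℤ) * ψ τ := by
  intro n
  induction n using Nat.strong_induction_on with
  | _ n IH =>
    intro a b c d hn hdet τ hτ
    by_cases hc : c = 0
    · subst hc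
      have had : a * d = 1 := by omega
      rcases Int.mul_eq_one_iff_eq_one_or_neg_one.1 had with ⟨rfl, rfl⟩ | ⟨rfl, rfl⟩
      · have e1 : ((1 : ℤ) : ℂ) * τ + (b : ℂ) = τ + ((b : ℤ) : ℂ) := by push_cast; ring
        have e2 : ((0 : ℤ) : ℂ) * τ + ((1 : ℤ) : ℂ) = 1 := by push_cast; ring
        rw [e1, e2, div_one, psi_int_shift hψ b τ hτ]
        norm_num
      · have e1 : ((-1 : ℤ) : ℂ) * τ + (b : ℂ) = -(τ + ((-b : ℤ) : ℂ)) := by push_cast; ring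
        have e2 : ((0 : ℤ) : ℂ) * τ + ((-1 : ℤ) : ℂ) = -1 := by push_cast; ring
        have e3 : -(τ + ((-b : ℤ) : ℂ)) / (-1 : ℂ) = τ + ((-b : ℤ) : ℂ) := by ring
        rw [e1, e2, e3, psi_int_shift hψ (-b) τ hτ]
        norm_num
    · -- c ≠ 0
      set a' := a % c with ha'
      set q := a / c with hq
      set b' := b - q * d with hb'
      have haqc : a = c * q + a' := by
        rw [ha', hq]; linarith [Int.mul_ediv_add_emod a c]
      have hdet' : a' * d - b' * c = 1 := by
        have : a' = a - c * q := by omega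
        rw [this, hb']; ring_nf; linarith [hdet]
      have hlt : a'.natAbs < n := by
        rw [← hn, ha']
        have h1 : a % c < |c| := by rw [Int.abs_eq_natAbs]; exact Int.emod_lt a hc
        have h2 : 0 ≤ a % c := Int.emod_nonneg a hc
        rw [Int.abs_eq_natAbs] at h1
        omega
      have hcd : ¬(c = 0 ∧ d = 0) := by rintro ⟨rfl, _⟩; exact hc rfl
      have hw : (c : ℂ) * τ + d ≠ 0 := denom_ne_zero c d hcd τ hτ
      have ha'b' : ¬(a' = 0 ∧ b' = 0) := by rintro ⟨h1, h2⟩; rw [h1, h2] at hdet'; simp at hdet'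
      have hw2 : (a' : ℂ) * τ + b' ≠ 0 := denom_ne_zero a' b' ha'b' τ hτ
      have hncd : ¬((-c) = 0 ∧ (-d) = 0) := by rintro ⟨h1, _⟩; exact hc (by omega)
      -- step 1 : shift
      have hstep1 : ((a : ℂ) * τ + b) / ((c : ℂ) * τ + d)
          = ((a' : ℂ) * τ + b') / ((c : ℂ) * τ + d) + (q : ℤ) := by
        have hca : (a : ℂ) = (c : ℂ) * q + a' := by exact_mod_cast congrArg (Int.cast : ℤ → ℂ) haqc
        have hcb : (b : ℂ) = (b' : ℂ) + q * d := by push_cast [hb']; ring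
        rw [div_add' _ _ _ hw, hca, hcb]; congr 1; ring
      have him1 : 0 < (((a' : ℂ) * τ + b') / ((c : ℂ) * τ + d)).im :=
        moebius_im a' b' c d hdet' τ hτ
      rw [hstep1, psi_int_shift hψ q _ him1]
      -- step 2 : inversion
      set z := (((-c : ℤ) : ℂ) * τ + ((-d : ℤ) : ℂ)) / ((a' : ℂ) * τ + b') with hz
      have hdet2 : (-c) * b' - (-d) * a' = 1 := by linarith [hdet']
      have hz_im : 0 < z.im := moebius_im (-c) (-d) a' b' hdet2 τ hτ
      have hznum : ((-c : ℤ) : ℂ) * τ + ((-d : ℤ) : ℂ) ≠ 0 := denom_ne_zero _ _ hncd τ hτ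
      have hz_ne : z ≠ 0 := div_ne_zero hznum hw2
      have harg : ((a' : ℂ) * τ + b') / ((c : ℂ) * τ + d) = -1 / z := by
        rw [div_eq_div_iff hw hz_ne, hz]
        field_simp
        push_cast
        ring
      rw [harg, hψ.2.2 z hz_im]
      have hrec := IH a'.natAbs hlt (-c) (-d) a' b' rfl hdet2 τ hτ
      rw [hz] at *
      rw [hrec]
      have hzz : ((((-c : ℤ) : ℂ) * τ + ((-d : ℤ) : ℂ)) / ((a' : ℂ) * τ + b')) * ((a' : ℂ) * τ + b')
          = -((c : ℂ) * τ + d) := by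
        rw [div_mul_cancel₀ _ hw2]
        push_cast
        ring
      rw [← mul_assoc, ← mul_zpow, hzz]
      congr 1
      rw [show -((c : ℂ) * τ + d) = (-1) * ((c : ℂ) * τ + d) by ring, mul_zpow]
      norm_num

lemma sum_range_mul_split (a δ : ℕ) (hδ : 0 < δ) (f : ℕ → ℂ) :
    ∑ j ∈ Finset.range (a * δ), f j = ∑ s ∈ Finset.range a, ∑ r ∈ Finset.range δ, f (δ * s + r) := by
  rw [← Finset.sum_product']
  apply Finset.sum_nbij' (i := fun j => ((j / δ : ℕ), (j % δ : ℕ)))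
    (j := fun p => δ * p.1 + p.2)
  · intro j hj
    rw [Finset.mem_range] at hj
    refine Finset.mem_product.2 ⟨Finset.mem_range.2 ?_, Finset.mem_range.2 (Nat.mod_lt _ hδ)⟩
    rwa [Nat.div_lt_iff_lt_mul hδ]
  · rintro ⟨s, r⟩ hp
    rw [Finset.mem_product, Finset.mem_range, Finset.mem_range] at hp
    refine Finset.mem_range.2 ?_
    calc δ * s + r < δ * s + δ := by omega
    _ = δ * (s + 1) := by ring
    _ ≤ δ * a := Nat.mul_le_mul_left δ hp.1
    _ = a * δ := mul_comm _ _
  · intro j _; exact Nat.div_add_mod j δ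
  · rintro ⟨s, r⟩ hp
    rw [Finset.mem_product, Finset.mem_range, Finset.mem_range] at hp
    have h1 : (δ * s + r) / δ = s := by
      rw [Nat.mul_add_div hδ, Nat.div_eq_of_lt hp.2, add_zero]
    have h2 : (δ * s + r) % δ = r := by
      rw [Nat.mul_add_mod, Nat.mod_eq_of_lt hp.2]
    rw [h1, h2]
  · intro j _
    rw [Nat.div_add_mod]

lemma pair_sum (m a δ : ℕ) [NeZero m] (ha : 0 < a) (hδ : 0 < δ) (hm : m = a * δ)
    (u : ℕ) (hu : Nat.Coprime u δ) (A B : ℕ) :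
    ∑ x : ZMod m, ∑ y : ZMod m,
      eZ m ((x.val : ℤ) * B + (y.val : ℤ) * A - ((a : ℤ) * u) * x.val * y.val)
    = if a ∣ A ∧ a ∣ B then
        (m : ℂ) * a *
          eZ δ (((((u : ZMod δ))⁻¹).val : ℤ) * ((A / a : ℕ) : ℤ) * ((B / a : ℕ) : ℤ))
      else 0 := by
  haveI : NeZero δ := ⟨hδ.ne'⟩
  have ha' : (a : ℤ) ≠ 0 := by exact_mod_cast ha.ne'
  have hy : ∀ x : ZMod m,
      ∑ y : ZMod m, eZ m ((x.val : ℤ) * B + (y.val : ℤ) * A - ((a : ℤ) * u) * x.val * y.val)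
      = (if (m : ℤ) ∣ ((A : ℤ) - (a : ℤ) * u * x.val) then (m : ℂ) else 0)
          * eZ m ((x.val : ℤ) * B) := by
    intro x
    have he : ∀ y : ZMod m,
        eZ m ((x.val : ℤ) * B + (y.val : ℤ) * A - ((a : ℤ) * u) * x.val * y.val)
        = eZ m ((y.val : ℤ) * ((A : ℤ) - (a : ℤ) * u * x.val)) * eZ m ((x.val : ℤ) * B) := by
      intro y
      rw [← eZ_add]
      congr 1
      ring
    rw [Finset.sum_congr rfl (fun y _ => he y), ← Finset.sum_mul, geom_sum_zmod m]
  rw [Finset.sum_congr rfl (fun x _ => hy x)]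
  rw [sum_zmod_eq_sum_range m
    (fun j => (if (m : ℤ) ∣ ((A : ℤ) - (a : ℤ) * u * j) then (m : ℂ) else 0) * eZ m ((j : ℤ) * B))]
  by_cases hA : a ∣ A
  · obtain ⟨A₁, hA₁⟩ := hA
    set x₀ : ℕ := (((u : ZMod δ))⁻¹ * (A₁ : ZMod δ)).val with hx₀
    have hx₀lt : x₀ < δ := ZMod.val_lt _
    have huu : (u : ZMod δ) * (u : ZMod δ)⁻¹ = 1 := ZMod.coe_mul_inv_eq_one u hu
    have hcond : ∀ j : ℕ, ((m : ℤ) ∣ ((A : ℤ) - (a : ℤ) * u * j)) ↔ j % δ = x₀ := by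
      intro j
      have e1 : (A : ℤ) - (a : ℤ) * u * j = (a : ℤ) * ((A₁ : ℤ) - (u : ℤ) * j) := by
        rw [hA₁]; push_cast; ring
      rw [e1, hm]
      push_cast
      rw [mul_dvd_mul_iff_left ha', ← ZMod.intCast_zmod_eq_zero_iff_dvd]
      push_cast
      constructor
      · intro h
        have h1 : (u : ZMod δ) * j = (A₁ : ZMod δ) := by linear_combination -h
        have h2 : (j : ZMod δ) = (u : ZMod δ)⁻¹ * (A₁ : ZMod δ) := by
          calc (j : ZMod δ) = ((u : ZMod δ)⁻¹ * (u : ZMod δ)) * j := by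
                rw [mul_comm ((u : ZMod δ))⁻¹, huu, one_mul]
          _ = (u : ZMod δ)⁻¹ * ((u : ZMod δ) * j) := by ring
          _ = (u : ZMod δ)⁻¹ * (A₁ : ZMod δ) := by rw [h1]
        have h3 : ((j % δ : ℕ) : ZMod δ) = (x₀ : ZMod δ) := by
          rw [hx₀, ZMod.natCast_val, ZMod.cast_id, ← h2, ZMod.natCast_mod]
        have := congrArg ZMod.val h3
        rwa [ZMod.val_cast_of_lt (Nat.mod_lt _ hδ), ZMod.val_cast_of_lt hx₀lt] at this
      · intro h
        have h2 : (j : ZMod δ) = (u : ZMod δ)⁻¹ * (A₁ : ZMod δ) := by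
          have : ((j % δ : ℕ) : ZMod δ) = (j : ZMod δ) := by
            rw [ZMod.natCast_mod]
          rw [← this, h, hx₀, ZMod.natCast_val, ZMod.cast_id]
        rw [h2]
        calc (A₁ : ZMod δ) - (u : ZMod δ) * ((u : ZMod δ)⁻¹ * (A₁ : ZMod δ))
            = (A₁ : ZMod δ) * (1 - (u : ZMod δ) * (u : ZMod δ)⁻¹) := by ring
        _ = 0 := by rw [huu]; ring
    have hsplit := sum_range_mul_split a δ hδ
      (fun j => (if (m : ℤ) ∣ ((A : ℤ) - (a : ℤ) * u * j) then (m : ℂ) else 0) * eZ m ((j : ℤ) * B))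
    rw [← hm] at hsplit
    rw [hsplit]
    have hmod : ∀ s r : ℕ, r < δ → (δ * s + r) % δ = r := by
      intro s r hr
      rw [Nat.mul_add_mod, Nat.mod_eq_of_lt hr]
    have hinner : ∀ s ∈ Finset.range a,
        (∑ r ∈ Finset.range δ,
          (if (m : ℤ) ∣ ((A : ℤ) - (a : ℤ) * u * ((δ * s + r : ℕ) : ℤ)) then (m : ℂ) else 0)
            * eZ m (((δ * s + r : ℕ) : ℤ) * B))
        = (m : ℂ) * (eZ a ((s : ℤ) * B) * eZ m ((x₀ : ℤ) * B)) := by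
      intro s _
      have hterm : ∀ r ∈ Finset.range δ,
          (if (m : ℤ) ∣ ((A : ℤ) - (a : ℤ) * u * ((δ * s + r : ℕ) : ℤ)) then (m : ℂ) else 0)
            * eZ m (((δ * s + r : ℕ) : ℤ) * B)
          = if r = x₀ then (m : ℂ) * eZ m (((δ * s + r : ℕ) : ℤ) * B) else 0 := by
        intro r hr
        rw [Finset.mem_range] at hr
        have hiff : ((m : ℤ) ∣ ((A : ℤ) - (a : ℤ) * u * ((δ * s + r : ℕ) : ℤ))) ↔ r = x₀ := by
          rw [hcond (δ * s + r), hmod s r hr]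
        split_ifs with h1 h2 h2
        · ring
        · exact absurd (hiff.1 h1) h2
        · exact absurd (hiff.2 h2) h1
        · ring
      rw [Finset.sum_congr rfl hterm, Finset.sum_ite_eq' (Finset.range δ) x₀]
      rw [if_pos (Finset.mem_range.2 hx₀lt)]
      have esplit : eZ m (((δ * s + x₀ : ℕ) : ℤ) * B)
          = eZ a ((s : ℤ) * B) * eZ m ((x₀ : ℤ) * B) := by
        have e1 : ((δ * s + x₀ : ℕ) : ℤ) * B = (δ : ℤ) * ((s : ℤ) * B) + (x₀ : ℤ) * B := by
          push_cast; ring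
        rw [e1, eZ_add]
        congr 1
        have : m = δ * a := by rw [hm]; ring
        rw [this]
        exact eZ_mul_left δ a hδ.ne' _
      rw [esplit]
    rw [Finset.sum_congr rfl hinner]
    have hfac : ∀ x ∈ Finset.range a, (m : ℂ) * (eZ a ((x : ℤ) * B) * eZ m ((x₀ : ℤ) * B))
        = ((m : ℂ) * eZ m ((x₀ : ℤ) * B)) * eZ a ((x : ℤ) * B) := by intro x _; ring
    rw [Finset.sum_congr rfl hfac, ← Finset.mul_sum, geom_sum_range a ha.ne' B]
    by_cases hB : a ∣ B
    · obtain ⟨B₁, hB₁⟩ := hB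
      have hBz : (a : ℤ) ∣ (B : ℤ) := Int.natCast_dvd_natCast.2 ⟨B₁, hB₁⟩
      rw [if_pos hBz, if_pos (⟨⟨A₁, hA₁⟩, ⟨B₁, hB₁⟩⟩ : a ∣ A ∧ a ∣ B)]
      have hAdiv : A / a = A₁ := by rw [hA₁, Nat.mul_div_cancel_left _ ha]
      have hBdiv : B / a = B₁ := by rw [hB₁, Nat.mul_div_cancel_left _ ha]
      rw [hAdiv, hBdiv]
      have ephase : eZ m ((x₀ : ℤ) * B)
          = eZ δ (((((u : ZMod δ))⁻¹).val : ℤ) * (A₁ : ℤ) * (B₁ : ℤ)) := by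
        have e1 : (x₀ : ℤ) * B = (a : ℤ) * ((x₀ : ℤ) * B₁) := by
          rw [hB₁]; push_cast; ring
        rw [e1, hm, eZ_mul_left a δ ha.ne']
        apply eZ_congr
        push_cast [ZMod.natCast_val, ZMod.cast_id, hx₀]
        try ring
      rw [ephase]
      ring
    · have hBz : ¬ (a : ℤ) ∣ (B : ℤ) := fun h => hB (Int.natCast_dvd_natCast.1 h)
      rw [if_neg hBz, if_neg (fun h : a ∣ A ∧ a ∣ B => hB h.2)]
      ring
  · have hzero : ∀ j ∈ Finset.range m,
        (if (m : ℤ) ∣ ((A : ℤ) - (a : ℤ) * u * j) then (m : ℂ) else 0) * eZ m ((j : ℤ) * B) = 0 := by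
      intro j _
      rw [if_neg, zero_mul]
      intro hdvd
      apply hA
      have ham : (a : ℤ) ∣ (m : ℤ) := by rw [hm]; exact ⟨δ, by push_cast; ring⟩
      have : (a : ℤ) ∣ ((A : ℤ) - (a : ℤ) * u * j) := dvd_trans ham hdvd
      have h2 : (a : ℤ) ∣ (a : ℤ) * u * j := ⟨(u : ℤ) * j, by ring⟩
      have h3 : (A : ℤ) = ((A : ℤ) - (a : ℤ) * u * j) + (a : ℤ) * u * j := by ring
      have h4 : (a : ℤ) ∣ (A : ℤ) := by rw [h3]; exact dvd_add this h2
      exact_mod_cast h4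
    rw [Finset.sum_congr rfl hzero, Finset.sum_const_zero, if_neg (fun h => hA h.1)]

def idxE (i : Fin 11) : Fin (2 * 11) := ⟨2 * i.val, by have := i.isLt; omega⟩
def idxO (i : Fin 11) : Fin (2 * 11) := ⟨2 * i.val + 1, by have := i.isLt; omega⟩

lemma hypB_eq (x y : Fin (2 * 11) → ℤ) :
    hypB 11 x y = ∑ i : Fin 11, (x (idxE i) * y (idxO i) + x (idxO i) * y (idxE i)) := rfl

lemma hypB_half (x : Fin (2 * 11) → ℤ) :
    hypB 11 x x / 2 = ∑ i : Fin 11, x (idxE i) * x (idxO i) := by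
  have : hypB 11 x x = 2 * ∑ i : Fin 11, x (idxE i) * x (idxO i) := by
    rw [hypB_eq, Finset.mul_sum]
    apply Finset.sum_congr rfl
    intro i _
    ring
  rw [this, Int.mul_ediv_cancel_left _ (by norm_num)]

lemma hypB_smul (c : ℤ) (x y : Fin (2 * 11) → ℤ) :
    hypB 11 (fun k => c * x k) y = c * hypB 11 x y := by
  rw [hypB_eq, hypB_eq, Finset.mul_sum]
  apply Finset.sum_congr rfl
  intro i _
  ring

def pairEquiv (M : ℕ) : (Fin 11 → ZMod M × ZMod M) ≃ (Fin (2 * 11) → ZMod M) where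
  toFun W k := if h : k.val % 2 = 0
    then (W ⟨k.val / 2, by have := k.isLt; omega⟩).1
    else (W ⟨k.val / 2, by have := k.isLt; omega⟩).2
  invFun w i := (w (idxE i), w (idxO i))
  left_inv W := by
    funext i
    have h1 : (2 * i.val) % 2 = 0 := by omega
    have h2 : (2 * i.val + 1) % 2 ≠ 0 := by omega
    simp only [idxE, idxO, h1, h2, dif_pos, dif_neg, not_false_iff]
    have e1 : (2 * i.val) / 2 = i.val := by omega
    have e2 : (2 * i.val + 1) / 2 = i.val := by omega
    rw [show (⟨(2 * i.val) / 2, _⟩ : Fin 11) = i from Fin.ext e1,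
        show (⟨(2 * i.val + 1) / 2, _⟩ : Fin 11) = i from Fin.ext e2]
    exact Prod.ext ((dif_pos h1).trans (congrArg (fun j => (W j).1) (Fin.ext e1))) (dif_neg h2)
  right_inv w := by
    funext k
    by_cases h : k.val % 2 = 0
    · simp only [h, dif_pos]
      congr 1
      exact Fin.ext (by simp [idxE]; omega)
    · simp only [h, dif_neg, not_false_iff]
      congr 1
      exact Fin.ext (by simp [idxO]; omega)

lemma pairEquiv_idxE (M : ℕ) (W : Fin 11 → ZMod M × ZMod M) (i : Fin 11) :
    pairEquiv M W (idxE i) = (W i).1 := by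
  have := congrFun ((pairEquiv M).left_inv W) i
  exact congrArg Prod.fst this

lemma pairEquiv_idxO (M : ℕ) (W : Fin 11 → ZMod M × ZMod M) (i : Fin 11) :
    pairEquiv M W (idxO i) = (W i).2 := by
  have := congrFun ((pairEquiv M).left_inv W) i
  exact congrArg Prod.snd this

lemma sum_fun_pairs (M : ℕ) [NeZero M] (f : Fin 11 → ZMod M → ZMod M → ℂ) :
    ∑ w : Fin (2 * 11) → ZMod M, ∏ i : Fin 11, f i (w (idxE i)) (w (idxO i))
    = ∏ i : Fin 11, ∑ x : ZMod M, ∑ y : ZMod M, f i x y := by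
  have h1 : ∑ w : Fin (2 * 11) → ZMod M, ∏ i : Fin 11, f i (w (idxE i)) (w (idxO i))
      = ∑ W : Fin 11 → ZMod M × ZMod M, ∏ i : Fin 11, f i (W i).1 (W i).2 := by
    rw [← Equiv.sum_comp (pairEquiv M) (fun w => ∏ i : Fin 11, f i (w (idxE i)) (w (idxO i)))]
    apply Finset.sum_congr rfl
    intro W _
    apply Finset.prod_congr rfl
    intro i _
    rw [pairEquiv_idxE, pairEquiv_idxO]
  rw [h1]
  have h2 : ∀ i : Fin 11, (∑ x : ZMod M, ∑ y : ZMod M, f i x y)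
      = ∑ p : ZMod M × ZMod M, f i p.1 p.2 := by
    intro i
    rw [Fintype.sum_prod_type]
  rw [Finset.prod_congr rfl (fun i _ => h2 i), Finset.prod_univ_sum, Fintype.piFinset_univ]

lemma eZ_finset_sum {ι : Type*} (M : ℕ) (s : Finset ι) (f : ι → ℤ) :
    eZ M (∑ i ∈ s, f i) = ∏ i ∈ s, eZ M (f i) := by
  classical
  induction s using Finset.induction_on with
  | empty => simp [eZ]
  | @insert a s ha ih => rw [Finset.sum_insert ha, Finset.prod_insert ha, eZ_add, ih]

lemma usum_eval (N : ℕ) [NeZero N] (v : Fin (2 * 11) → ZMod N)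
    (g a δ d' : ℕ) (hg : 0 < g) (ha : 0 < a) (hδ : 0 < δ)
    (hd' : d' = a * δ) (hN : N = g * d')
    (c : ℕ) (hc : Nat.Coprime c δ) :
    ∑ u : Fin (2 * 11) → ZMod N,
      eZ N (hypB 11 (zlift u) (zlift v)) *
        (if ∀ i, ((d' : ℕ) : ZMod N) * u i = 0
          then eZ d' (-(((a * c : ℕ) : ℤ) * (hypB 11 (zdiv u g) (zdiv u g) / 2)))
          else 0)
    = if ∀ i, a ∣ (v i).val then
        ((d' : ℂ) * a) ^ 11 *
          eZ δ (((((c : ZMod δ))⁻¹).val : ℤ) * (hypB 11 (zdiv v a) (zdiv v a) / 2))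
      else 0 := by
  classical
  have hd'0 : d' ≠ 0 := by rw [hd']; exact Nat.mul_ne_zero ha.ne' hδ.ne'
  haveI : NeZero d' := ⟨hd'0⟩
  haveI : NeZero δ := ⟨hδ.ne'⟩
  have hNgd : N = g * d' := hN
  set P : (Fin (2 * 11) → ZMod N) → Prop := fun u => ∀ i, ((d' : ℕ) : ZMod N) * u i = 0 with hPdef
  set G : (Fin (2 * 11) → ZMod N) → ℂ := fun u =>
    eZ N (hypB 11 (zlift u) (zlift v)) *
      eZ d' (-(((a * c : ℕ) : ℤ) * (hypB 11 (zdiv u g) (zdiv u g) / 2))) with hGdef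
  have step1 : ∑ u : Fin (2 * 11) → ZMod N,
      eZ N (hypB 11 (zlift u) (zlift v)) *
        (if P u then eZ d' (-(((a * c : ℕ) : ℤ) * (hypB 11 (zdiv u g) (zdiv u g) / 2))) else 0)
      = ∑ u ∈ Finset.univ.filter P, G u := by
    rw [Finset.sum_filter]
    apply Finset.sum_congr rfl
    intro u _
    rw [hGdef]
    split_ifs <;> simp
  rw [step1]
  -- reindex
  set I : (Fin (2 * 11) → ZMod d') → (Fin (2 * 11) → ZMod N) :=
    fun w k => ((g * (w k).val : ℕ) : ZMod N) with hIdef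
  set J : (Fin (2 * 11) → ZMod N) → (Fin (2 * 11) → ZMod d') :=
    fun u k => (((u k).val / g : ℕ) : ZMod d') with hJdef
  have hval : ∀ (w : Fin (2 * 11) → ZMod d') (k), (I w k).val = g * (w k).val := by
    intro w k
    apply ZMod.val_cast_of_lt
    calc g * (w k).val < g * d' := by nlinarith [ZMod.val_lt (w k), hg]
    _ = N := hN.symm
  have hPI : ∀ w, P (I w) := by
    intro w k
    have : ((d' : ℕ) : ZMod N) * I w k = ((d' * (g * (w k).val) : ℕ) : ZMod N) := by
      rw [hIdef]; push_cast; ring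
    rw [this, ZMod.natCast_eq_zero_iff]
    exact ⟨(w k).val, by rw [hN]; ring⟩
  have hgdvd : ∀ u, P u → ∀ k, g ∣ (u k).val := by
    intro u hu k
    have h1 := hu k
    have h2 : ((d' * (u k).val : ℕ) : ZMod N) = 0 := by
      rw [Nat.cast_mul, ZMod.natCast_val, ZMod.cast_id]
      exact h1
    rw [ZMod.natCast_eq_zero_iff] at h2
    obtain ⟨t, ht⟩ := h2
    have hNt : N * t = d' * (g * t) := by rw [hN]; ring
    have ht' : d' * (u k).val = d' * (g * t) := ht.trans hNt
    exact ⟨t, Nat.eq_of_mul_eq_mul_left (Nat.pos_of_ne_zero hd'0) ht'⟩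
  have hJI : ∀ w, J (I w) = w := by
    intro w
    funext k
    rw [hJdef, hIdef]
    simp only
    rw [hval w k, Nat.mul_div_cancel_left _ hg, ZMod.natCast_val, ZMod.cast_id]
  have hIJ : ∀ u, P u → I (J u) = u := by
    intro u hu
    funext k
    rw [hIdef, hJdef]
    simp only
    rw [ZMod.val_cast_of_lt (show (u k).val / g < d' from ?hlt),
        Nat.mul_div_cancel' (hgdvd u hu k), ZMod.natCast_val, ZMod.cast_id]
    case hlt =>
      obtain ⟨t, ht⟩ := hgdvd u hu k
      have hv' : (u k).val < g * d' := lt_of_lt_of_eq (ZMod.val_lt (u k)) hN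
      rw [ht, Nat.mul_div_cancel_left _ hg]
      rw [ht] at hv'
      exact Nat.lt_of_mul_lt_mul_left hv'
  -- value of G on image
  set f : Fin 11 → ZMod d' → ZMod d' → ℂ := fun i x y =>
    eZ d' ((x.val : ℤ) * ((v (idxO i)).val : ℕ) + (y.val : ℤ) * ((v (idxE i)).val : ℕ)
      - ((a : ℤ) * c) * x.val * y.val) with hfdef
  have hGI : ∀ w : Fin (2 * 11) → ZMod d',
      G (I w) = ∏ i : Fin 11, f i (w (idxE i)) (w (idxO i)) := by
    intro w
    have hzl : zlift (I w) = fun k => (g : ℤ) * ((w k).val : ℤ) := by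
      funext k
      rw [zlift]
      rw [hval w k]
      push_cast
      ring
    have hzd : zdiv (I w) g = fun k => ((w k).val : ℤ) := by
      funext k
      rw [zdiv, hval w k]
      push_cast
      rw [Int.mul_ediv_cancel_left _ (by exact_mod_cast hg.ne')]
    rw [hGdef]
    simp only
    have heZN : ∀ t : ℤ, eZ N ((g : ℤ) * t) = eZ d' t := by
      intro t
      rw [hN]
      exact_mod_cast eZ_mul_left g d' hg.ne' t
    rw [hzl, hzd, hypB_smul, heZN]
    rw [hypB_half]
    rw [← eZ_add]
    have hexp : hypB 11 (fun k => ((w k).val : ℤ)) (zlift v)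
        + -(((a * c : ℕ) : ℤ) * ∑ i : Fin 11, ((w (idxE i)).val : ℤ) * ((w (idxO i)).val : ℤ))
        = ∑ i : Fin 11, (((w (idxE i)).val : ℤ) * ((v (idxO i)).val : ℕ)
            + ((w (idxO i)).val : ℤ) * ((v (idxE i)).val : ℕ)
            - ((a : ℤ) * c) * (w (idxE i)).val * (w (idxO i)).val) := by
      rw [hypB_eq, Finset.mul_sum, ← Finset.sum_neg_distrib, ← Finset.sum_add_distrib]
      apply Finset.sum_congr rfl
      intro i _
      simp only [zlift]
      push_cast
      ring
    rw [hexp, eZ_finset_sum]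
  have step2 : ∑ u ∈ Finset.univ.filter P, G u
      = ∑ w : Fin (2 * 11) → ZMod d', ∏ i : Fin 11, f i (w (idxE i)) (w (idxO i)) := by
    apply Finset.sum_nbij' (i := J) (j := I)
    · intro u _; exact Finset.mem_univ _
    · intro w _
      exact Finset.mem_filter.2 ⟨Finset.mem_univ _, hPI w⟩
    · intro u hu
      exact hIJ u (Finset.mem_filter.1 hu).2
    · intro w _
      exact hJI w
    · intro u hu
      conv_lhs => rw [← hIJ u (Finset.mem_filter.1 hu).2]
      rw [hGI (J u)]
  rw [step2, sum_fun_pairs d' f]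
  have hpair : ∀ i : Fin 11,
      (∑ x : ZMod d', ∑ y : ZMod d', f i x y)
      = if a ∣ ((v (idxE i)).val) ∧ a ∣ ((v (idxO i)).val) then
          (d' : ℂ) * a *
            eZ δ (((((c : ZMod δ))⁻¹).val : ℤ) * (((v (idxE i)).val / a : ℕ) : ℤ)
              * (((v (idxO i)).val / a : ℕ) : ℤ))
        else 0 := by
    intro i
    have := pair_sum d' a δ ha hδ hd' c hc ((v (idxE i)).val) ((v (idxO i)).val)
    rw [hfdef]
    simp only
    rw [← this]
  rw [Finset.prod_congr rfl (fun i _ => hpair i)]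
  by_cases hall : ∀ k, a ∣ (v k).val
  · rw [if_pos hall]
    have hcond : ∀ i : Fin 11, (a ∣ ((v (idxE i)).val) ∧ a ∣ ((v (idxO i)).val)) := by
      intro i
      exact ⟨hall _, hall _⟩
    have : ∀ i : Fin 11, (if a ∣ ((v (idxE i)).val) ∧ a ∣ ((v (idxO i)).val) then
          (d' : ℂ) * a *
            eZ δ (((((c : ZMod δ))⁻¹).val : ℤ) * (((v (idxE i)).val / a : ℕ) : ℤ)
              * (((v (idxO i)).val / a : ℕ) : ℤ))
        else 0)
        = (d' : ℂ) * a *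
            eZ δ (((((c : ZMod δ))⁻¹).val : ℤ) * (((v (idxE i)).val / a : ℕ) : ℤ)
              * (((v (idxO i)).val / a : ℕ) : ℤ)) := by
      intro i
      rw [if_pos (hcond i)]
    rw [Finset.prod_congr rfl (fun i _ => this i), Finset.prod_mul_distrib]
    rw [Finset.prod_const, Finset.card_univ, Fintype.card_fin]
    congr 1
    rw [← eZ_finset_sum]
    apply eZ_congr
    congr 1
    rw [hypB_half, Finset.mul_sum]
    apply Finset.sum_congr rfl
    intro i _
    rw [zdiv, zdiv]
    push_cast
    ring
  · rw [if_neg hall]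
    push_neg at hall
    obtain ⟨k, hk⟩ := hall
    have hk2 : k.val < 2 * 11 := k.isLt
    set i : Fin 11 := ⟨k.val / 2, by omega⟩ with hidef
    apply Finset.prod_eq_zero (Finset.mem_univ i)
    rw [if_neg]
    intro hcon
    rcases Nat.even_or_odd k.val with he | ho
    · rw [Nat.even_iff] at he
      have : k = idxE i := by
        apply Fin.ext
        rw [hidef, idxE]
        simp only
        omega
      exact hk (this ▸ hcon.1)
    · have : k = idxO i := by
        apply Fin.ext
        rw [hidef, idxO]
        simp only
        rw [Nat.odd_iff] at ho
        omega
      exact hk (this ▸ hcon.2)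

lemma psi_transform {ψ : ℂ → ℂ} (hψ : MeroModularNeg12 ψ) (τ : ℂ) (hτ : 0 < τ.im)
    (a g δ β c : ℕ) (ha : 0 < a) (hg : 0 < g) (hδ : 0 < δ)
    (hβc : ((β : ZMod δ)) * ((c : ZMod δ)) = -1) :
    ψ (((a : ℂ) * (-1 / τ) + ((g * β : ℕ) : ℂ)) / ((g * δ : ℕ) : ℂ))
    = ((g : ℂ) * τ / a) ^ (-12 : ℤ) *
        ψ (((g : ℂ) * τ + ((a * c : ℕ) : ℂ)) / ((a * δ : ℕ) : ℂ)) := by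
  have hτ0 : τ ≠ 0 := by
    intro h; rw [h] at hτ; simp at hτ
  have ha0 : (a : ℂ) ≠ 0 := by exact_mod_cast ha.ne'
  have hg0 : (g : ℂ) ≠ 0 := by exact_mod_cast hg.ne'
  have hδ0 : (δ : ℂ) ≠ 0 := by exact_mod_cast hδ.ne'
  -- Bezout data
  have hdvd : (δ : ℤ) ∣ ((β : ℤ) * c + 1) := by
    have : (((β : ℤ) * c + 1 : ℤ) : ZMod δ) = 0 := by
      push_cast
      rw [hβc]
      ring
    exact_mod_cast (ZMod.intCast_zmod_eq_zero_iff_dvd _ _).1 this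
  set s : ℤ := -(((β : ℤ) * c + 1) / δ) with hsdef
  have hs : (δ : ℤ) * s = -((β : ℤ) * c + 1) := by
    rw [hsdef, mul_neg, mul_comm, Int.ediv_mul_cancel hdvd]
  have hsC : (δ : ℂ) * (s : ℂ) = -((β : ℂ) * c + 1) := by
    have := congrArg (Int.cast : ℤ → ℂ) hs
    push_cast at this
    exact_mod_cast this
  set t : ℤ := -(c : ℤ) with htdef
  have hdet : (β : ℤ) * t - s * δ = 1 := by
    rw [htdef]
    have : s * δ = δ * s := by ring
    rw [this, hs]
    ring
  set w : ℂ := ((g : ℂ) * τ + ((a * c : ℕ) : ℂ)) / ((a * δ : ℕ) : ℂ) with hwdef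
  have hmC : ((a * δ : ℕ) : ℂ) ≠ 0 := by
    push_cast
    exact mul_ne_zero ha0 hδ0
  have hwim : 0 < w.im := by
    rw [hwdef, Complex.div_im]
    have h1 : ((g : ℂ) * τ + ((a * c : ℕ) : ℂ)).im = (g : ℝ) * τ.im := by
      simp [Complex.add_im, Complex.mul_im]
    have h2 : (((a * δ : ℕ) : ℂ)).im = 0 := by simp
    have h3 : (((a * δ : ℕ) : ℂ)).re = (a * δ : ℕ) := by simp
    rw [h1, h2, h3]
    have h4 : Complex.normSq ((a * δ : ℕ) : ℂ) = ((a * δ : ℕ) : ℝ) ^ 2 := by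
      simp [Complex.normSq_apply]
      try ring
    rw [h4]
    have h5 : (0 : ℝ) < (a * δ : ℕ) := by positivity
    have h6 : (0 : ℝ) < (g : ℝ) * τ.im := by
      have : (0:ℝ) < (g:ℝ) := by exact_mod_cast hg
      exact mul_pos this hτ
    have h7 : (0 : ℝ) < ((a * δ : ℕ) : ℝ) ^ 2 := by positivity
    rw [mul_zero, zero_div, sub_zero]
    positivity
  have hmod := psi_SL2 hψ (δ : ℕ) (β : ℤ) s (δ : ℤ) t (by simp) hdet w hwim
  have hδwt : ((δ : ℤ) : ℂ) * w + ((t : ℤ) : ℂ) = (g : ℂ) * τ / a := by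
    rw [hwdef, htdef]
    push_cast
    field_simp
    ring
  have hδwt0 : ((δ : ℤ) : ℂ) * w + ((t : ℤ) : ℂ) ≠ 0 := by
    rw [hδwt]
    exact div_ne_zero (mul_ne_zero hg0 hτ0) ha0
  have hnum : ((β : ℤ) : ℂ) * w + ((s : ℤ) : ℂ)
      = (((g * β : ℕ) : ℂ) * τ - a) / ((a * δ : ℕ) : ℂ) := by
    rw [hwdef]
    push_cast
    push_cast at hsC
    field_simp
    linear_combination (a : ℂ) * hsC
  have harg : (((β : ℤ) : ℂ) * w + ((s : ℤ) : ℂ)) / (((δ : ℤ) : ℂ) * w + ((t : ℤ) : ℂ))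
      = ((a : ℂ) * (-1 / τ) + ((g * β : ℕ) : ℂ)) / ((g * δ : ℕ) : ℂ) := by
    rw [hnum, hδwt]
    push_cast
    field_simp
    ring
  rw [← harg, hmod, hδwt]

def cOf (b d : ℕ) : ℕ := (-(((b / Nat.gcd b d : ℕ) : ZMod (d / Nat.gcd b d)))⁻¹).val

def phiT (N : ℕ) (x : Σ _ : ℕ × ℕ, ℕ) : Σ _ : ℕ × ℕ, ℕ :=
  ⟨(Nat.gcd x.2 x.1.2, N / Nat.gcd x.2 x.1.2), x.1.1 * cOf x.2 x.1.2⟩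

lemma cOf_spec (b d g δ β : ℕ) (hd : 0 < d) (hb : b < d)
    (hg : g = Nat.gcd b d) (hδ : δ = d / g) (hβ : β = b / g) :
    0 < g ∧ 0 < δ ∧ d = g * δ ∧ b = g * β ∧ β < δ ∧ Nat.Coprime β δ ∧
    Nat.Coprime (cOf b d) δ ∧ cOf b d < δ ∧
    ((β : ZMod δ)) * ((cOf b d : ℕ) : ZMod δ) = -1 ∧
    (((cOf b d : ℕ) : ZMod δ))⁻¹ = -((β : ZMod δ)) := by
  have hgpos : 0 < g := by rw [hg]; exact Nat.gcd_pos_of_pos_right _ hd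
  have hgd : g ∣ d := by rw [hg]; exact Nat.gcd_dvd_right _ _
  have hgb : g ∣ b := by rw [hg]; exact Nat.gcd_dvd_left _ _
  have hdgδ : d = g * δ := by rw [hδ, Nat.mul_div_cancel' hgd]
  have hbgβ : b = g * β := by rw [hβ, Nat.mul_div_cancel' hgb]
  have hδpos : 0 < δ := by
    rcases Nat.eq_zero_or_pos δ with h | h
    · rw [h, mul_zero] at hdgδ; omega
    · exact h
  haveI : NeZero δ := ⟨hδpos.ne'⟩
  have hβδ : β < δ := by
    have : g * β < g * δ := by rw [← hdgδ, ← hbgβ]; exact hb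
    exact Nat.lt_of_mul_lt_mul_left this
  have hcop : Nat.Coprime β δ := by
    rw [hβ, hδ, hg]
    exact Nat.coprime_div_gcd_div_gcd (by rw [← hg]; exact hgpos)
  set uβ : (ZMod δ)ˣ := ZMod.unitOfCoprime β hcop with huβ
  have hu : (uβ : ZMod δ) = (β : ZMod δ) := ZMod.coe_unitOfCoprime β hcop
  set U : (ZMod δ)ˣ := -uβ⁻¹ with hU
  have hUval : ((U : (ZMod δ)ˣ) : ZMod δ) = -((β : ZMod δ))⁻¹ := by
    rw [hU]
    rw [Units.val_neg]
    rw [← ZMod.inv_coe_unit, hu]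
  have hcofU : cOf b d = ((U : (ZMod δ)ˣ) : ZMod δ).val := by
    rw [cOf, ← hg, ← hδ, ← hβ, hUval]
  have hcofcast : ((cOf b d : ℕ) : ZMod δ) = ((U : (ZMod δ)ˣ) : ZMod δ) := by
    rw [hcofU, ZMod.natCast_val, ZMod.cast_id]
  have hcopc : Nat.Coprime (cOf b d) δ := by
    rw [hcofU]
    exact ZMod.val_coe_unit_coprime U
  have hclt : cOf b d < δ := by rw [hcofU]; exact ZMod.val_lt _
  have hββinv : (β : ZMod δ) * ((β : ZMod δ))⁻¹ = 1 := ZMod.coe_mul_inv_eq_one β hcop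
  have hβc : ((β : ZMod δ)) * ((cOf b d : ℕ) : ZMod δ) = -1 := by
    rw [hcofcast, hUval]
    calc (β : ZMod δ) * -((β : ZMod δ))⁻¹ = -((β : ZMod δ) * ((β : ZMod δ))⁻¹) := by ring
    _ = -1 := by rw [hββinv]
  have hUinv : U⁻¹ = -uβ := by
    apply inv_eq_of_mul_eq_one_right
    rw [hU]
    ext
    rw [Units.val_mul, Units.val_neg, Units.val_neg, ← ZMod.inv_coe_unit, hu]
    calc -((β : ZMod δ))⁻¹ * -((uβ : (ZMod δ)ˣ) : ZMod δ) = ((β : ZMod δ))⁻¹ * (β : ZMod δ) := by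
          rw [hu]; ring
    _ = 1 := by rw [mul_comm]; exact hββinv
  have hinv : (((cOf b d : ℕ) : ZMod δ))⁻¹ = -((β : ZMod δ)) := by
    rw [hcofcast, ZMod.inv_coe_unit, hUinv, Units.val_neg, hu]
  exact ⟨hgpos, hδpos, hdgδ, hbgβ, hβδ, hcop, hcopc, hclt, hβc, hinv⟩

lemma phiT_mem_and_invol (N : ℕ) (hN : N ≠ 0) (a d b : ℕ) (had : a * d = N) (hb : b < d) :
    (phiT N ⟨(a, d), b⟩).1.1 * (phiT N ⟨(a, d), b⟩).1.2 = N ∧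
    (phiT N ⟨(a, d), b⟩).2 < (phiT N ⟨(a, d), b⟩).1.2 ∧
    phiT N (phiT N ⟨(a, d), b⟩) = ⟨(a, d), b⟩ := by
  have hd : 0 < d := by
    rcases Nat.eq_zero_or_pos d with h | h
    · rw [h, mul_zero] at had; omega
    · exact h
  have ha : 0 < a := by
    rcases Nat.eq_zero_or_pos a with h | h
    · rw [h, zero_mul] at had; omega
    · exact h
  obtain ⟨hgpos, hδpos, hdgδ, hbgβ, hβδ, hcop, hcopc, hclt, hβc, hinv⟩ :=
    cOf_spec b d (Nat.gcd b d) (d / Nat.gcd b d) (b / Nat.gcd b d) hd hb rfl rfl rfl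
  set g := Nat.gcd b d with hgdef
  set δ := d / g with hδdef
  set β := b / g with hβdef
  set c := cOf b d with hcdef
  haveI : NeZero δ := ⟨hδpos.ne'⟩
  have hNgaδ : N = g * (a * δ) := by
    rw [← had, hdgδ]; ring
  have hNg : N / g = a * δ := by rw [hNgaδ, Nat.mul_div_cancel_left _ hgpos]
  have h1 : (phiT N ⟨(a, d), b⟩) = ⟨(g, N / g), a * c⟩ := rfl
  have hmem1 : g * (N / g) = N := by rw [hNg, ← hNgaδ]
  have hmem2 : a * c < N / g := by
    rw [hNg]
    exact Nat.mul_lt_mul_of_le_of_lt (le_refl a) hclt ha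
  refine ⟨by rw [h1]; exact hmem1, by rw [h1]; exact hmem2, ?_⟩
  rw [h1]
  have hgcd2 : Nat.gcd (a * c) (N / g) = a := by
    rw [hNg, Nat.gcd_mul_left, hcopc, mul_one]
  have hcOf2 : cOf (a * c) (N / g) = β := by
    rw [cOf, hgcd2, hNg, Nat.mul_div_cancel_left c ha, Nat.mul_div_cancel_left δ ha]
    rw [hinv, neg_neg, ZMod.val_cast_of_lt hβδ]
  have hNd : N / a = d := by rw [← had, Nat.mul_div_cancel_left d ha]
  show (⟨(Nat.gcd (a * c) (N / g), N / Nat.gcd (a * c) (N / g)),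
      g * cOf (a * c) (N / g)⟩ : Σ _ : ℕ × ℕ, ℕ) = ⟨(a, d), b⟩
  rw [hgcd2, hcOf2, hNd, ← hbgβ]

lemma cond_iff (N a d : ℕ) [NeZero N] (had : a * d = N) (hd : 0 < d)
    (v : Fin (2 * 11) → ZMod N) :
    (∀ i, ((d : ℕ) : ZMod N) * v i = 0) ↔ ∀ i, a ∣ (v i).val := by
  have key : ∀ z : ZMod N, (((d : ℕ) : ZMod N) * z = 0 ↔ a ∣ z.val) := by
    intro z
    have h1 : ((d : ℕ) : ZMod N) * z = ((d * z.val : ℕ) : ZMod N) := by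
      rw [Nat.cast_mul, ZMod.natCast_val, ZMod.cast_id]
    rw [h1, ZMod.natCast_eq_zero_iff]
    constructor
    · rintro ⟨t, ht⟩
      refine ⟨t, ?_⟩
      have hNt : N * t = d * (a * t) := by rw [← had]; ring
      have := ht.trans hNt
      exact Nat.eq_of_mul_eq_mul_left hd this
    · rintro ⟨t, ht⟩
      exact ⟨t, by rw [ht, ← had]; ring⟩
  exact ⟨fun h i => (key (v i)).1 (h i), fun h i => (key (v i)).2 (h i)⟩

lemma scalar_identity (N a d g δ : ℕ) (τ : ℂ) (hτ0 : τ ≠ 0)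
    (ha : 0 < a) (hg : 0 < g) (hδ : 0 < δ) (had : a * d = N) (hdgδ : d = g * δ) :
    (d : ℂ) * ((g : ℂ) * τ / (a : ℂ)) ^ (-12 : ℤ)
    = (N : ℂ) ^ (-11 : ℤ) * τ ^ (-12 : ℤ) * ((((a * δ : ℕ) : ℂ)) * a) ^ 11 *
        ((a * δ : ℕ) : ℂ) := by
  have ha0 : (a : ℂ) ≠ 0 := by exact_mod_cast ha.ne'
  have hg0 : (g : ℂ) ≠ 0 := by exact_mod_cast hg.ne'
  have hδ0 : (δ : ℂ) ≠ 0 := by exact_mod_cast hδ.ne'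
  have hNC : (N : ℂ) = (a : ℂ) * ((g : ℂ) * (δ : ℂ)) := by
    rw [← had, hdgδ]; push_cast; ring
  have hdC : (d : ℂ) = (g : ℂ) * (δ : ℂ) := by rw [hdgδ]; push_cast; ring
  have hN0 : (N : ℂ) ≠ 0 := by
    rw [hNC]
    exact mul_ne_zero ha0 (mul_ne_zero hg0 hδ0)
  have he1 : ∀ x : ℂ, x ^ (-12 : ℤ) = (x ^ (12 : ℕ))⁻¹ := by
    intro x
    rw [show (-12 : ℤ) = -((12 : ℕ) : ℤ) by norm_num, zpow_neg, zpow_natCast]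
  have he2 : (N : ℂ) ^ (-11 : ℤ) = ((N : ℂ) ^ (11 : ℕ))⁻¹ := by
    rw [show (-11 : ℤ) = -((11 : ℕ) : ℤ) by norm_num, zpow_neg, zpow_natCast]
  rw [he1, he1, he2, hdC, hNC]
  push_cast
  field_simp

lemma triple_term (N : ℕ) [NeZero N] (v : Fin (2 * 11) → ZMod N) {ψ : ℂ → ℂ}
    (hψ : MeroModularNeg12 ψ) (τ : ℂ) (hτ : 0 < τ.im)
    (a d b : ℕ) (had : a * d = N) (hb : b < d) :
    (if ∀ i, ((d : ℕ) : ZMod N) * v i = 0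
      then eZ d (-((b : ℤ) * (hypB 11 (zdiv v a) (zdiv v a) / 2))) else 0) * (d : ℂ) *
      ψ (((a : ℂ) * (-1 / τ) + (b : ℂ)) / (d : ℂ))
    = (N : ℂ) ^ (-11 : ℤ) * τ ^ (-12 : ℤ) *
        ((∑ u : Fin (2 * 11) → ZMod N,
          eZ N (hypB 11 (zlift u) (zlift v)) *
            (if ∀ i, ((N / Nat.gcd b d : ℕ) : ZMod N) * u i = 0
              then eZ (N / Nat.gcd b d)
                (-(((a * cOf b d : ℕ) : ℤ) *
                  (hypB 11 (zdiv u (Nat.gcd b d)) (zdiv u (Nat.gcd b d)) / 2)))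
              else 0)) * ((N / Nat.gcd b d : ℕ) : ℂ) *
          ψ (((Nat.gcd b d : ℂ) * τ + ((a * cOf b d : ℕ) : ℂ)) / ((N / Nat.gcd b d : ℕ) : ℂ))) := by
  have hτ0 : τ ≠ 0 := by intro h; rw [h] at hτ; simp at hτ
  have hd : 0 < d := by omega
  have hN0 : N ≠ 0 := NeZero.ne N
  have ha : 0 < a := by
    rcases Nat.eq_zero_or_pos a with h | h
    · rw [h, zero_mul] at had; omega
    · exact h
  obtain ⟨hgpos, hδpos, hdgδ, hbgβ, hβδ, hcop, hcopc, hclt, hβc, hinv⟩ :=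
    cOf_spec b d (Nat.gcd b d) (d / Nat.gcd b d) (b / Nat.gcd b d) hd hb rfl rfl rfl
  set g := Nat.gcd b d with hgdef
  set δ := d / g with hδdef
  set β := b / g with hβdef
  set c := cOf b d with hcdef
  haveI : NeZero δ := ⟨hδpos.ne'⟩
  have hNgaδ : N = g * (a * δ) := by rw [← had, hdgδ]; ring
  have hNg : N / g = a * δ := by rw [hNgaδ, Nat.mul_div_cancel_left _ hgpos]
  have hNgd' : N = g * (N / g) := by rw [hNg]; exact hNgaδ
  have husum := usum_eval N v g a δ (N / g) hgpos ha hδpos hNg hNgd' c hcopc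
  rw [husum]
  simp only [cond_iff N a d had hd v]
  by_cases hall : ∀ i, a ∣ (v i).val
  · rw [if_pos hall, if_pos hall]
    have hbC : (b : ℂ) = ((g * β : ℕ) : ℂ) := by rw [← hbgβ]
    have hdC : (d : ℂ) = ((g * δ : ℕ) : ℂ) := by rw [← hdgδ]
    have hNgC : ((N / g : ℕ) : ℂ) = ((a * δ : ℕ) : ℂ) := by rw [hNg]
    have hψtr := psi_transform hψ τ hτ a g δ β c ha hgpos hδpos hβc
    rw [hbC, hdC, hψtr, hNgC]
    have ePhase : eZ d (-((b : ℤ) * (hypB 11 (zdiv v a) (zdiv v a) / 2)))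
        = eZ δ (((((c : ℕ) : ZMod δ))⁻¹.val : ℤ) * (hypB 11 (zdiv v a) (zdiv v a) / 2)) := by
      have e1 : -((b : ℤ) * (hypB 11 (zdiv v a) (zdiv v a) / 2))
          = (g : ℤ) * (-((β : ℤ) * (hypB 11 (zdiv v a) (zdiv v a) / 2))) := by
        have : (b : ℤ) = (g : ℤ) * (β : ℤ) := by exact_mod_cast hbgβ
        rw [this]; ring
      have e2 : eZ d (-((b : ℤ) * (hypB 11 (zdiv v a) (zdiv v a) / 2)))
          = eZ (g * δ) ((g : ℤ) * (-((β : ℤ) * (hypB 11 (zdiv v a) (zdiv v a) / 2)))) := by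
        rw [← e1, ← hdgδ]
      rw [e2, eZ_mul_left g δ hgpos.ne']
      apply eZ_congr
      push_cast
      rw [ZMod.natCast_val, ZMod.cast_id, hinv]
      ring
    rw [ePhase]
    have hsc := scalar_identity N a d g δ τ hτ0 ha hgpos hδpos had hdgδ
    rw [hdC] at hsc
    linear_combination (eZ δ (((((c : ℕ) : ZMod δ))⁻¹.val : ℤ) * (hypB 11 (zdiv v a) (zdiv v a) / 2)) *
      ψ (((g : ℂ) * τ + ((a * c : ℕ) : ℂ)) / ((a * δ : ℕ) : ℂ))) * hsc
  · rw [if_neg hall, if_neg hall]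
    simp


/-- Montonen–Olive duality of the deformed Hecke operator:
`T'_N^{(v)} ψ(-1/τ) = N^{-11} τ^{-12} Σ_{u ∈ L/NL} ζ_N^{u·v} T'_N^{(u)} ψ(τ)`. -/
theorem deformedHecke_S_duality (N : ℕ) [NeZero N] (v : Fin (2 * 11) → ZMod N)
    (ψ : ℂ → ℂ) (hψ : MeroModularNeg12 ψ) (τ : ℂ) (hτ : 0 < τ.im) :
    deformedHecke N v ψ (-1 / τ) =
      (N : ℂ) ^ (-11 : ℤ) * τ ^ (-12 : ℤ) *
        ∑ u : Fin (2 * 11) → ZMod N,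
          eZ N (hypB 11 (zlift u) (zlift v)) * deformedHecke N u ψ τ := by
  classical
  have hN0 : N ≠ 0 := NeZero.ne N
  set S : Finset (Σ _ : ℕ × ℕ, ℕ) :=
    (Nat.divisorsAntidiagonal N).sigma (fun p => Finset.range p.2) with hSdef
  have hL : deformedHecke N v ψ (-1 / τ) = (N : ℂ) ^ (-2 : ℤ) *
      ∑ x ∈ S, (if ∀ i, ((x.1.2 : ℕ) : ZMod N) * v i = 0
          then eZ x.1.2 (-((x.2 : ℤ) * (hypB 11 (zdiv v x.1.1) (zdiv v x.1.1) / 2)))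
          else 0) * (x.1.2 : ℂ) * ψ (((x.1.1 : ℂ) * (-1 / τ) + (x.2 : ℂ)) / (x.1.2 : ℂ)) := by
    rw [deformedHecke, Finset.sum_sigma', ← hSdef]
  have hRu : ∀ u : Fin (2 * 11) → ZMod N, deformedHecke N u ψ τ = (N : ℂ) ^ (-2 : ℤ) *
      ∑ x ∈ S, (if ∀ i, ((x.1.2 : ℕ) : ZMod N) * u i = 0
          then eZ x.1.2 (-((x.2 : ℤ) * (hypB 11 (zdiv u x.1.1) (zdiv u x.1.1) / 2)))
          else 0) * (x.1.2 : ℂ) * ψ (((x.1.1 : ℂ) * τ + (x.2 : ℂ)) / (x.1.2 : ℂ)) := by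
    intro u
    rw [deformedHecke, Finset.sum_sigma', ← hSdef]
  rw [hL]
  rw [Finset.sum_congr rfl (fun u (_ : u ∈ Finset.univ) => by rw [hRu u])]
  -- pull out N^-2 and swap sums
  have hswap : ∑ u : Fin (2 * 11) → ZMod N,
      eZ N (hypB 11 (zlift u) (zlift v)) * ((N : ℂ) ^ (-2 : ℤ) *
        ∑ x ∈ S, (if ∀ i, ((x.1.2 : ℕ) : ZMod N) * u i = 0
          then eZ x.1.2 (-((x.2 : ℤ) * (hypB 11 (zdiv u x.1.1) (zdiv u x.1.1) / 2)))
          else 0) * (x.1.2 : ℂ) * ψ (((x.1.1 : ℂ) * τ + (x.2 : ℂ)) / (x.1.2 : ℂ)))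
      = (N : ℂ) ^ (-2 : ℤ) * ∑ x ∈ S, ∑ u : Fin (2 * 11) → ZMod N,
          eZ N (hypB 11 (zlift u) (zlift v)) *
            ((if ∀ i, ((x.1.2 : ℕ) : ZMod N) * u i = 0
              then eZ x.1.2 (-((x.2 : ℤ) * (hypB 11 (zdiv u x.1.1) (zdiv u x.1.1) / 2)))
              else 0) * (x.1.2 : ℂ) * ψ (((x.1.1 : ℂ) * τ + (x.2 : ℂ)) / (x.1.2 : ℂ))) := by
    have s1 : ∀ u : Fin (2 * 11) → ZMod N,
        eZ N (hypB 11 (zlift u) (zlift v)) * ((N : ℂ) ^ (-2 : ℤ) *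
          ∑ x ∈ S, (if ∀ i, ((x.1.2 : ℕ) : ZMod N) * u i = 0
            then eZ x.1.2 (-((x.2 : ℤ) * (hypB 11 (zdiv u x.1.1) (zdiv u x.1.1) / 2)))
            else 0) * (x.1.2 : ℂ) * ψ (((x.1.1 : ℂ) * τ + (x.2 : ℂ)) / (x.1.2 : ℂ)))
        = ∑ x ∈ S, (N : ℂ) ^ (-2 : ℤ) * (eZ N (hypB 11 (zlift u) (zlift v)) *
            ((if ∀ i, ((x.1.2 : ℕ) : ZMod N) * u i = 0
              then eZ x.1.2 (-((x.2 : ℤ) * (hypB 11 (zdiv u x.1.1) (zdiv u x.1.1) / 2)))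
              else 0) * (x.1.2 : ℂ) * ψ (((x.1.1 : ℂ) * τ + (x.2 : ℂ)) / (x.1.2 : ℂ)))) := by
      intro u
      rw [Finset.mul_sum, Finset.mul_sum]
      apply Finset.sum_congr rfl
      intro x _
      ring
    rw [Finset.sum_congr rfl (fun u (_ : u ∈ Finset.univ) => s1 u), Finset.sum_comm,
      Finset.mul_sum]
    apply Finset.sum_congr rfl
    intro x _
    rw [Finset.mul_sum]
  rw [hswap]
  -- reduce to the sigma-sum identity
  have key : ∑ x ∈ S, (if ∀ i, ((x.1.2 : ℕ) : ZMod N) * v i = 0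
          then eZ x.1.2 (-((x.2 : ℤ) * (hypB 11 (zdiv v x.1.1) (zdiv v x.1.1) / 2)))
          else 0) * (x.1.2 : ℂ) * ψ (((x.1.1 : ℂ) * (-1 / τ) + (x.2 : ℂ)) / (x.1.2 : ℂ))
      = ∑ x ∈ S, (N : ℂ) ^ (-11 : ℤ) * τ ^ (-12 : ℤ) *
          ∑ u : Fin (2 * 11) → ZMod N,
            eZ N (hypB 11 (zlift u) (zlift v)) *
              ((if ∀ i, ((x.1.2 : ℕ) : ZMod N) * u i = 0
                then eZ x.1.2 (-((x.2 : ℤ) * (hypB 11 (zdiv u x.1.1) (zdiv u x.1.1) / 2)))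
                else 0) * (x.1.2 : ℂ) * ψ (((x.1.1 : ℂ) * τ + (x.2 : ℂ)) / (x.1.2 : ℂ))) := by
    apply Finset.sum_nbij' (i := phiT N) (j := phiT N)
    · rintro ⟨⟨a, d⟩, b⟩ hx
      rw [hSdef, Finset.mem_sigma, Nat.mem_divisorsAntidiagonal, Finset.mem_range] at hx
      obtain ⟨h1, h2, h3⟩ := phiT_mem_and_invol N hN0 a d b hx.1.1 hx.2
      rw [hSdef, Finset.mem_sigma, Nat.mem_divisorsAntidiagonal, Finset.mem_range]
      exact ⟨⟨h1, hN0⟩, h2⟩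
    · rintro ⟨⟨a, d⟩, b⟩ hx
      rw [hSdef, Finset.mem_sigma, Nat.mem_divisorsAntidiagonal, Finset.mem_range] at hx
      obtain ⟨h1, h2, h3⟩ := phiT_mem_and_invol N hN0 a d b hx.1.1 hx.2
      rw [hSdef, Finset.mem_sigma, Nat.mem_divisorsAntidiagonal, Finset.mem_range]
      exact ⟨⟨h1, hN0⟩, h2⟩
    · rintro ⟨⟨a, d⟩, b⟩ hx
      rw [hSdef, Finset.mem_sigma, Nat.mem_divisorsAntidiagonal, Finset.mem_range] at hx
      exact (phiT_mem_and_invol N hN0 a d b hx.1.1 hx.2).2.2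
    · rintro ⟨⟨a, d⟩, b⟩ hx
      rw [hSdef, Finset.mem_sigma, Nat.mem_divisorsAntidiagonal, Finset.mem_range] at hx
      exact (phiT_mem_and_invol N hN0 a d b hx.1.1 hx.2).2.2
    · rintro ⟨⟨a, d⟩, b⟩ hx
      rw [hSdef, Finset.mem_sigma, Nat.mem_divisorsAntidiagonal, Finset.mem_range] at hx
      have had : a * d = N := hx.1.1
      have hb : b < d := hx.2
      have htt := triple_term N v hψ τ hτ a d b had hb
      rw [htt]
      have hre : ∑ u : Fin (2 * 11) → ZMod N,
          eZ N (hypB 11 (zlift u) (zlift v)) *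
            ((if ∀ i, ((N / Nat.gcd b d : ℕ) : ZMod N) * u i = 0
              then eZ (N / Nat.gcd b d)
                (-(((a * cOf b d : ℕ) : ℤ) *
                  (hypB 11 (zdiv u (Nat.gcd b d)) (zdiv u (Nat.gcd b d)) / 2)))
              else 0) * ((N / Nat.gcd b d : ℕ) : ℂ) *
              ψ (((Nat.gcd b d : ℂ) * τ + ((a * cOf b d : ℕ) : ℂ)) / ((N / Nat.gcd b d : ℕ) : ℂ)))
          = (∑ u : Fin (2 * 11) → ZMod N,
              eZ N (hypB 11 (zlift u) (zlift v)) *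
                (if ∀ i, ((N / Nat.gcd b d : ℕ) : ZMod N) * u i = 0
                  then eZ (N / Nat.gcd b d)
                    (-(((a * cOf b d : ℕ) : ℤ) *
                      (hypB 11 (zdiv u (Nat.gcd b d)) (zdiv u (Nat.gcd b d)) / 2)))
                  else 0)) * ((N / Nat.gcd b d : ℕ) : ℂ) *
              ψ (((Nat.gcd b d : ℂ) * τ + ((a * cOf b d : ℕ) : ℂ)) / ((N / Nat.gcd b d : ℕ) : ℂ)) := by
        rw [Finset.sum_mul, Finset.sum_mul]
        apply Finset.sum_congr rfl
        intro u _
        ring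
      rw [← hre]
      rfl
  rw [key, ← Finset.mul_sum]
  ring
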